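/- Fix a positive integer q and an integer t with 0 ≤ t < 2^q. For a nonnegative integer k with binary digits a_j (k = Σ_{j≥0} a_j 2^j), the bit-reversal value y(k) = Σ_{j≥0} a_j 2^{-j-1} satisfies t·2^{-q} ≤ y(k) < (t+1)·2^{-q} if and only if k mod 2^q equals the fixed integer z = Σ_{j=0}^{q-1} b_j 2^j, where t·2^{-q} = Σ_{j=0}^{q-1} b_j 2^{-j-1} with b_j ∈ {0,1}. -/

import Mathlib

/-!
Write `N` for the bit reversal of the lowest `q` binary digits of `k`. The digits of `k` beyond
the `q`-th contribute less than `2^{-q}` to `y(k)`, so `⌊2^q y(k)⌋ = N`; thus `y(k)` lies in the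
`t`-th dyadic interval of length `2^{-q}` iff `N = t`. By the hypothesis on the `b_j`, `t` is the
bit reversal of `b_0, …, b_{q-1}`, and a sum `Σ_{j<q} d_j 2^j` with digits `d_j ∈ {0,1}`
determines its digits; so `N = t` iff `k` and `z` have the same lowest `q` digits.
-/

/-- The binary bit-reversal map: `k = Σ a_j 2^j ↦ Σ a_j 2^{-j-1}`. -/
noncomputable def vdcY (k : ℕ) : ℝ :=
  ∑ j ∈ Finset.range k, ((k / 2 ^ j % 2 : ℕ) : ℝ) * ((2:ℝ)⁻¹) ^ (j + 1)

open Finset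

namespace VanDerCorput

def binDigit (m j : ℕ) : ℕ := m / 2 ^ j % 2

lemma binDigit_le_one (m j : ℕ) : binDigit m j ≤ 1 :=
  Nat.lt_succ_iff.mp (Nat.mod_lt _ two_pos)

lemma sum_binDigit_mul_pow (q m : ℕ) : ∑ j ∈ range q, binDigit m j * 2 ^ j = m % 2 ^ q := by
  induction q with
  | zero => simp [Nat.mod_one]
  | succ q ih =>
    rw [sum_range_succ, ih, pow_succ, Nat.mod_mul, binDigit, mul_comm]

lemma sum_mul_pow_eq_iff {q : ℕ} {d d' : ℕ → ℕ} (hd : ∀ j, d j ≤ 1) (hd' : ∀ j, d' j ≤ 1) :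
    ∑ j ∈ range q, d j * 2 ^ j = ∑ j ∈ range q, d' j * 2 ^ j ↔ ∀ j < q, d j = d' j := by
  induction q generalizing d d' with
  | zero => simp
  | succ q ih =>
    have shift (e : ℕ → ℕ) :
        ∑ j ∈ range (q + 1), e j * 2 ^ j = e 0 + 2 * ∑ j ∈ range q, e (j + 1) * 2 ^ j := by
      rw [sum_range_succ', mul_sum, pow_zero, mul_one, add_comm]
      exact congrArg _ (sum_congr rfl fun j _ => by ring)
    have h0 := hd 0
    have h0' := hd' 0
    rw [shift, shift, Nat.forall_lt_succ_left, ← ih (fun j => hd _) (fun j => hd' _)]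
    omega

def revBits (q : ℕ) (d : ℕ → ℕ) : ℕ := ∑ j ∈ range q, d j * 2 ^ (q - 1 - j)

lemma revBits_eq_iff {q : ℕ} {d d' : ℕ → ℕ} (hd : ∀ j, d j ≤ 1) (hd' : ∀ j, d' j ≤ 1) :
    revBits q d = revBits q d' ↔ ∀ j < q, d j = d' j := by
  have reflect (e : ℕ → ℕ) : revBits q e = ∑ j ∈ range q, e (q - 1 - j) * 2 ^ j := by
    rw [revBits, ← sum_range_reflect]
    refine sum_congr rfl fun j hj => ?_
    rw [Nat.sub_sub_self (by grind)]
  rw [reflect, reflect, sum_mul_pow_eq_iff (fun j => hd _) (fun j => hd' _)]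
  refine ⟨fun h j hj => ?_, fun h j hj => h _ (by omega)⟩
  simpa [Nat.sub_sub_self (by omega : j ≤ q - 1)] using h (q - 1 - j) (by omega)

noncomputable def binFrac (q : ℕ) (d : ℕ → ℕ) : ℝ := ∑ j ∈ range q, (d j : ℝ) * 2⁻¹ ^ (j + 1)

lemma binFrac_nonneg (q : ℕ) (d : ℕ → ℕ) : 0 ≤ binFrac q d :=
  sum_nonneg fun _ _ => by positivity

lemma binFrac_eq_revBits_mul (q : ℕ) (d : ℕ → ℕ) :
    binFrac q d = revBits q d * (2 ^ q : ℝ)⁻¹ := by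
  rw [binFrac, revBits, Nat.cast_sum, sum_mul]
  refine sum_congr rfl fun j hj => ?_
  have hpow : (2 : ℝ) ^ q = 2 ^ (q - 1 - j) * 2 ^ (j + 1) := by
    rw [← pow_add]
    congr 1
    have := mem_range.mp hj
    omega
  rw [hpow, inv_pow]
  push_cast
  field_simp

lemma binFrac_mono (d : ℕ → ℕ) {q M : ℕ} (h : q ≤ M) : binFrac q d ≤ binFrac M d :=
  sum_le_sum_of_subset_of_nonneg (range_subset_range.mpr h) fun _ _ _ => by positivity

lemma binFrac_le_add_sub {d : ℕ → ℕ} (hd : ∀ j, d j ≤ 1) {q M : ℕ} (h : q ≤ M) :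
    binFrac M d ≤ binFrac q d + (2⁻¹ ^ q - 2⁻¹ ^ M) := by
  induction M, h using Nat.le_induction with
  | base => simp
  | succ M _ ih =>
    have hdM : (d M : ℝ) ≤ 1 := by exact_mod_cast hd M
    have hstep : (d M : ℝ) * 2⁻¹ ^ (M + 1) ≤ 2⁻¹ ^ (M + 1) :=
      mul_le_of_le_one_left (by positivity) hdM
    rw [binFrac, sum_range_succ, ← binFrac]
    linarith [pow_succ (2⁻¹ : ℝ) M]

lemma binFrac_lt_add {d : ℕ → ℕ} (hd : ∀ j, d j ≤ 1) {q M : ℕ} (h : q ≤ M) :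
    binFrac M d < binFrac q d + (2 ^ q : ℝ)⁻¹ := by
  have hM : (0 : ℝ) < 2⁻¹ ^ M := by positivity
  rw [← inv_pow]
  linarith [binFrac_le_add_sub hd h]

lemma mul_inv_le_and_lt_iff_floor_eq {v c : ℝ} (hv : 0 ≤ v) (hc : 0 < c) (t : ℕ) :
    (t * c⁻¹ ≤ v ∧ v < (t + 1) * c⁻¹) ↔ ⌊v * c⌋₊ = t := by
  rw [Nat.floor_eq_iff (by positivity), ← mul_inv_le_iff₀ hc, ← lt_mul_inv_iff₀ hc]

lemma vdcY_eq_binFrac {k M : ℕ} (h : k ≤ M) : vdcY k = binFrac M (binDigit k) := by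
  refine sum_subset (range_subset_range.mpr h) fun j _ hj => ?_
  have hk : k < 2 ^ j :=
    (Nat.lt_two_pow_self).trans_le (Nat.pow_le_pow_right two_pos (by simpa using hj))
  simp [Nat.div_eq_of_lt hk]

lemma vdcY_nonneg (k : ℕ) : 0 ≤ vdcY k :=
  binFrac_nonneg k (binDigit k)

lemma floor_vdcY_mul_two_pow (q k : ℕ) : ⌊vdcY k * 2 ^ q⌋₊ = revBits q (binDigit k) := by
  rw [← mul_inv_le_and_lt_iff_floor_eq (vdcY_nonneg k) (by positivity),
    vdcY_eq_binFrac (le_max_left k q), add_mul, one_mul, ← binFrac_eq_revBits_mul]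
  exact ⟨binFrac_mono _ (le_max_right k q), binFrac_lt_add (binDigit_le_one k) (le_max_right k q)⟩

end VanDerCorput

open VanDerCorput in
theorem stmt_9_general (q t : ℕ)
    (b : ℕ → ℕ) (hb : ∀ j, b j ≤ 1)
    (htb : (t : ℝ) * ((2:ℝ) ^ q)⁻¹ =
      ∑ j ∈ Finset.range q, (b j : ℝ) * ((2:ℝ)⁻¹) ^ (j + 1))
    (k : ℕ) :
    ((t : ℝ) * ((2:ℝ) ^ q)⁻¹ ≤ vdcY k ∧
        vdcY k < ((t : ℝ) + 1) * ((2:ℝ) ^ q)⁻¹) ↔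
      k % 2 ^ q = ∑ j ∈ Finset.range q, b j * 2 ^ j := by
  have ht : t = revBits q b := by
    rw [← binFrac, binFrac_eq_revBits_mul] at htb
    exact_mod_cast mul_right_cancel₀ (by positivity) htb
  rw [mul_inv_le_and_lt_iff_floor_eq (vdcY_nonneg k) (by positivity), floor_vdcY_mul_two_pow,
    ht, revBits_eq_iff (binDigit_le_one k) hb, ← sum_binDigit_mul_pow,
    sum_mul_pow_eq_iff (binDigit_le_one k) hb]

/-- The bit-reversal value `y(k)` lies in the canonical interval
`[t·2^{-q}, (t+1)·2^{-q})` iff `k mod 2^q` equals the fixed integer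
`z = Σ_{j<q} b_j 2^j`, where the `b_j ∈ {0,1}` are the digits with
`t·2^{-q} = Σ_{j<q} b_j 2^{-j-1}`. -/
theorem stmt_9 (q t : ℕ) (hq : 1 ≤ q) (ht : t < 2 ^ q)
    (b : ℕ → ℕ) (hb : ∀ j, b j ≤ 1)
    (htb : (t : ℝ) * ((2:ℝ) ^ q)⁻¹ =
      ∑ j ∈ Finset.range q, (b j : ℝ) * ((2:ℝ)⁻¹) ^ (j + 1))
    (k : ℕ) :
    ((t : ℝ) * ((2:ℝ) ^ q)⁻¹ ≤ vdcY k ∧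
        vdcY k < ((t : ℝ) + 1) * ((2:ℝ) ^ q)⁻¹) ↔
      k % 2 ^ q = ∑ j ∈ Finset.range q, b j * 2 ^ j :=
  stmt_9_general q t b hb htb k
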